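/- Simulation lemma: Let M and M̂ be two MDPs on the same state/action spaces with rewards in [0, R_max], discount γ ∈ (0,1), reward error ε_R = sup_{s,a}|R(s,a) - R̂(s,a)| and transition error ε_P = sup_{s,a} TV(P(·|s,a), P̂(·|s,a)). Then for any policy π, the value functions satisfy ‖V^π_M - V^π_M̂‖_∞ ≤ (ε_R + 2γ V_max ε_P)/(1-γ), where V_max = R_max/(1-γ). -/
import Mathlib


/-- Simulation lemma: `‖V^π_M - V^π_M̂‖_∞ ≤ (εR + 2 γ Vmax εP)/(1-γ)` with
`Vmax = Rmax/(1-γ)`. -/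
theorem simulation_lemma
    {S A : Type*} [Fintype S] [Fintype A] [Nonempty S]
    (γ : ℝ) (hγ0 : 0 < γ) (hγ1 : γ < 1)
    (Rmax : ℝ) (hRmax : 0 ≤ Rmax)
    (R Rhat : S → A → ℝ)
    (hRrange : ∀ s a, R s a ∈ Set.Icc 0 Rmax)
    (hRhatrange : ∀ s a, Rhat s a ∈ Set.Icc 0 Rmax)
    (P Phat : S → A → S → ℝ)
    (hP0 : ∀ s a s', 0 ≤ P s a s') (hP1 : ∀ s a, ∑ s', P s a s' = 1)
    (hPhat0 : ∀ s a s', 0 ≤ Phat s a s') (hPhat1 : ∀ s a, ∑ s', Phat s a s' = 1)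
    (π : S → A → ℝ)
    (hπ0 : ∀ s a, 0 ≤ π s a) (hπ1 : ∀ s, ∑ a, π s a = 1)
    (εR εP : ℝ)
    (hR : ∀ s a, |R s a - Rhat s a| ≤ εR)
    (hTV : ∀ s a, (1/2) * ∑ s', |P s a s' - Phat s a s'| ≤ εP)
    (V Vhat : S → ℝ)
    -- `V` is the fixed point of the Bellman operator of `M`
    (hVfix : ∀ s, V s = ∑ a, π s a * (R s a + γ * ∑ s', P s a s' * V s'))
    -- `Vhat` is the fixed point of the Bellman operator of `M̂`
    (hVhatfix : ∀ s, Vhat s = ∑ a, π s a * (Rhat s a + γ * ∑ s', Phat s a s' * Vhat s'))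
    (hVbd : ∀ s, 0 ≤ V s ∧ V s ≤ Rmax / (1 - γ))
    (hVhatbd : ∀ s, 0 ≤ Vhat s ∧ Vhat s ≤ Rmax / (1 - γ)) :
    (⨆ s : S, |V s - Vhat s|)
      ≤ (εR + 2 * γ * (Rmax / (1 - γ)) * εP) / (1 - γ) := by

  have h1γ : 0 < 1 - γ := by linarith
  set Vmax := Rmax / (1 - γ) with hVmaxdef
  have hVmax0 : 0 ≤ Vmax := div_nonneg hRmax h1γ.le
  obtain ⟨s₀, hs₀⟩ := Finite.exists_max (fun s : S => |V s - Vhat s|)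
  set D := |V s₀ - Vhat s₀| with hDdef
  have hD0 : 0 ≤ D := abs_nonneg _
  have key : D ≤ εR + 2 * γ * Vmax * εP + γ * D := by
    have heq : V s₀ - Vhat s₀ = ∑ a, π s₀ a *
        ((R s₀ a - Rhat s₀ a)
          + γ * (∑ s', (P s₀ a s' - Phat s₀ a s') * V s')
          + γ * (∑ s', Phat s₀ a s' * (V s' - Vhat s'))) := by
      rw [hVfix, hVhatfix, ← Finset.sum_sub_distrib]
      refine Finset.sum_congr rfl (fun a _ => ?_)
      have h : ∑ s', (P s₀ a s' - Phat s₀ a s') * V s'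
          + ∑ s', Phat s₀ a s' * (V s' - Vhat s')
          = ∑ s', P s₀ a s' * V s' - ∑ s', Phat s₀ a s' * Vhat s' := by
        rw [← Finset.sum_add_distrib, ← Finset.sum_sub_distrib]
        exact Finset.sum_congr rfl (fun s' _ => by ring)
      linear_combination (-(π s₀ a * γ)) * h
    calc D = |∑ a, π s₀ a *
        ((R s₀ a - Rhat s₀ a)
          + γ * (∑ s', (P s₀ a s' - Phat s₀ a s') * V s')
          + γ * (∑ s', Phat s₀ a s' * (V s' - Vhat s')))| := by rw [hDdef, heq]
      _ ≤ ∑ a, π s₀ a * (εR + γ * (2 * Vmax * εP) + γ * D) := by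
          refine (Finset.abs_sum_le_sum_abs _ _).trans (Finset.sum_le_sum fun a _ => ?_)
          rw [abs_mul, abs_of_nonneg (hπ0 s₀ a)]
          refine mul_le_mul_of_nonneg_left ?_ (hπ0 s₀ a)
          have hA : |∑ s', (P s₀ a s' - Phat s₀ a s') * V s'| ≤ 2 * Vmax * εP := by
            refine (Finset.abs_sum_le_sum_abs _ _).trans ?_
            have h1 : ∀ s' ∈ Finset.univ, |(P s₀ a s' - Phat s₀ a s') * V s'|
                ≤ |P s₀ a s' - Phat s₀ a s'| * Vmax := by
              intro s' _
              rw [abs_mul]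
              refine mul_le_mul_of_nonneg_left ?_ (abs_nonneg _)
              rw [abs_of_nonneg (hVbd s').1]; exact (hVbd s').2
            refine (Finset.sum_le_sum h1).trans ?_
            rw [← Finset.sum_mul]
            nlinarith [hTV s₀ a, hVmax0]
          have hB : |∑ s', Phat s₀ a s' * (V s' - Vhat s')| ≤ D := by
            refine (Finset.abs_sum_le_sum_abs _ _).trans ?_
            have h1 : ∀ s' ∈ Finset.univ, |Phat s₀ a s' * (V s' - Vhat s')|
                ≤ Phat s₀ a s' * D := by
              intro s' _
              rw [abs_mul, abs_of_nonneg (hPhat0 s₀ a s')]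
              exact mul_le_mul_of_nonneg_left (hs₀ s') (hPhat0 s₀ a s')
            refine (Finset.sum_le_sum h1).trans ?_
            rw [← Finset.sum_mul, hPhat1, one_mul]
          calc |(R s₀ a - Rhat s₀ a)
              + γ * (∑ s', (P s₀ a s' - Phat s₀ a s') * V s')
              + γ * (∑ s', Phat s₀ a s' * (V s' - Vhat s'))|
              ≤ |R s₀ a - Rhat s₀ a|
                + |γ * (∑ s', (P s₀ a s' - Phat s₀ a s') * V s')|
                + |γ * (∑ s', Phat s₀ a s' * (V s' - Vhat s'))| := abs_add_three _ _ _
            _ ≤ εR + γ * (2 * Vmax * εP) + γ * D := by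
                rw [abs_mul, abs_mul, abs_of_pos hγ0]
                have := hR s₀ a
                nlinarith [hA, hB, hγ0]
      _ = εR + γ * (2 * Vmax * εP) + γ * D := by
          rw [← Finset.sum_mul, hπ1, one_mul]
      _ = εR + 2 * γ * Vmax * εP + γ * D := by ring
  have Dbound : D ≤ (εR + 2 * γ * Vmax * εP) / (1 - γ) := by
    rw [le_div_iff₀ h1γ]; nlinarith [key]
  exact ciSup_le fun s => (hs₀ s).trans Dbound
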